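/- Let A₀, t > 0 and 0 < q ≤ 1, Ω > 0, and set ϖ := (1+q²)·t/(4q·Ω). Let h_g be a random variable with density f_{h_g}(x) = (ϖ/A₀)·(x/A₀)^{((1+q²)ϖ/(2q))−1}·I₀(−((1−q²)ϖ/(2q))·ln(x/A₀)) on (0, A₀] (and 0 otherwise), and let h_a be independent of h_g with log-normal density f_{h_a}(h) = (1/(√(8πσ²)·h))·exp(−(ln h + 2σ²)²/(8σ²)) for h > 0, where σ > 0. Let η, h_p, γ̄, γ_thr > 0 and define h := η·h_p·h_g·h_a. Then the outage probability satisfies P( h²·γ̄ ≤ γ_thr ) = (ϖ/2)·∫₀¹ x^{((1+q²)ϖ/(2q))−1} · I₀(−((1−q²)ϖ/(2q))·ln x) · [ 1 − erf( (0.5·ln(γ̄/γ_thr) + ln(η·h_p·A₀·x) − 2σ²)/√(8σ²) ) ] dx. -/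

import Mathlib

open Real MeasureTheory ProbabilityTheory intervalIntegral

/-- The Gauss error function `erf x = (2/√π) ∫₀ˣ exp (−t²) dt`. -/
noncomputable def erf (x : ℝ) : ℝ :=
  (2 / Real.sqrt π) * ∫ t in (0:ℝ)..x, Real.exp (-t ^ 2)

/-- Modified Bessel function of the first kind of order zero:
`I₀(x) = (1/π) ∫₀^π exp(x cos τ) dτ`. -/
noncomputable def besselI0 (x : ℝ) : ℝ :=
  (1 / π) * ∫ τ in (0:ℝ)..π, Real.exp (x * Real.cos τ)

open Set
open scoped ENNReal NNReal

/-! Conditioning on `h_g` (independence and Fubini) writes the outage probability as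
`∫ f_{h_g}(x) P(h_a ≤ r(x)) dx` with `ln r(x) = -(½ ln(γ̄/γ_thr) + ln(η h_p x))`.
The log-normal `h_a` is `exp` of a Gaussian with mean `-2σ²` and variance `4σ²`, so
`P(h_a ≤ r) = ½ (1 + erf ((ln r + 2σ²) / √(8σ²)))`, which by oddness of `erf` is half the
bracket of the integrand. The substitution `x ↦ A₀ x` moves the support `(0, A₀]` of the GML
density to `(0, 1]`. -/

theorem erf_neg (x : ℝ) : erf (-x) = -erf x := by
  have h := intervalIntegral.integral_comp_neg (a := (0:ℝ)) (b := x)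
    (f := fun t : ℝ => rexp (-t ^ 2))
  simp only [neg_sq, neg_zero] at h
  rw [erf, erf, h, intervalIntegral.integral_symm]
  ring

theorem integral_Iic_exp_neg_sq (z : ℝ) :
    ∫ t in Iic z, rexp (-t ^ 2) = √π / 2 * (1 + erf z) := by
  have hint : Integrable fun t : ℝ => rexp (-t ^ 2) := by
    simpa using integrable_exp_neg_mul_sq one_pos
  have hhalf : ∫ t in Iic (0:ℝ), rexp (-t ^ 2) = √π / 2 := by
    have := integral_comp_neg_Ioi 0 (fun t : ℝ => rexp (-t ^ 2))
    simp only [neg_sq, neg_zero] at this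
    rw [← this]
    simpa using integral_gaussian_Ioi 1
  have := integral_Iic_sub_Iic hint.integrableOn hint.integrableOn (a := 0) (b := z)
  rw [erf]
  field_simp
  linarith

theorem image_const_add_mul_Iic {m c : ℝ} (hc : 0 < c) (z : ℝ) :
    (fun t => m + c * t) '' Iic z = Iic (m + c * z) := by
  rw [← image_image (m + ·) (c * ·), image_mul_left_Iic hc, image_const_add_Iic]

theorem gaussianReal_real_Iic (m : ℝ) {v : ℝ≥0} (hv : v ≠ 0) (w : ℝ) :
    (gaussianReal m v).real (Iic w) = (1 + erf ((w - m) / √(2 * v))) / 2 := by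
  set c := √(2 * v)
  have hc : 0 < c := by positivity
  have hc2 : c ^ 2 = 2 * v := Real.sq_sqrt (by positivity)
  have himage : Iic w = (fun t => m + c * t) '' Iic ((w - m) / c) := by
    rw [image_const_add_mul_Iic hc]; congr 1; field_simp; ring
  have hpdf (t : ℝ) : |c| • gaussianPDFReal m v (m + c * t) = (√π)⁻¹ * rexp (-t ^ 2) := by
    have : √(2 * π * v) = √π * c := by rw [← Real.sqrt_mul pi_pos.le]; ring_nf
    rw [gaussianPDFReal, abs_of_pos hc, smul_eq_mul, this, add_sub_cancel_left, mul_pow, hc2]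
    field_simp
  rw [measureReal_def, gaussianReal_apply_eq_integral _ hv,
    ENNReal.toReal_ofReal
      (setIntegral_nonneg measurableSet_Iic fun x _ => gaussianPDFReal_nonneg _ _ _),
    himage, integral_image_eq_integral_abs_deriv_smul measurableSet_Iic
      (fun t _ => (((hasDerivAt_id' t).const_mul c).const_add m).hasDerivWithinAt)
      (fun a _ b _ h => by simpa [hc.ne'] using h)]
  simp only [mul_one, hpdf, MeasureTheory.integral_const_mul, integral_Iic_exp_neg_sq]
  field_simp

theorem map_exp_withDensity_ofReal (f : ℝ → ℝ) :
    (volume.withDensity fun x => ENNReal.ofReal (f x)).map rexp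
      = (volume.restrict (Ioi 0)).withDensity fun y => ENNReal.ofReal (f (log y) / y) := by
  ext s hs
  rw [Measure.map_apply measurable_exp hs, withDensity_apply _ (measurable_exp hs),
    withDensity_apply _ hs, Measure.restrict_restrict hs, ← range_exp,
    ← image_preimage_eq_inter_range,
    lintegral_image_eq_lintegral_abs_deriv_mul (measurable_exp hs)
      (fun x _ => (hasDerivAt_exp x).hasDerivWithinAt) exp_injective.injOn]
  refine setLIntegral_congr_fun (measurable_exp hs) fun x _ => ?_
  rw [← ENNReal.ofReal_mul (abs_nonneg _), log_exp, abs_of_pos (exp_pos x),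
    mul_div_cancel₀ _ (exp_pos x).ne']

theorem map_exp_gaussianReal (m : ℝ) {v : ℝ≥0} (hv : v ≠ 0) :
    (gaussianReal m v).map rexp
      = (volume.restrict (Ioi 0)).withDensity
          fun y => ENNReal.ofReal (gaussianPDFReal m v (log y) / y) := by
  rw [gaussianReal_of_var_ne_zero _ hv]
  exact map_exp_withDensity_ofReal _

theorem withDensity_logNormal_eq_map_exp_gaussianReal {σ : ℝ} (hσ : σ ≠ 0) :
    volume.withDensity (fun x => ENNReal.ofReal (if 0 < x then
        (1 / (√(8 * π * σ ^ 2) * x)) * rexp (-(log x + 2 * σ ^ 2) ^ 2 / (8 * σ ^ 2)) else 0))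
      = (gaussianReal (-2 * σ ^ 2) (4 * σ ^ 2).toNNReal).map rexp := by
  rw [map_exp_gaussianReal _ (Real.toNNReal_pos.2 (by positivity)).ne',
    ← withDensity_indicator measurableSet_Ioi]
  congr 1
  funext y
  by_cases hy : 0 < y
  · rw [if_pos hy, indicator_of_mem (mem_Ioi.2 hy), gaussianPDFReal,
      Real.coe_toNNReal _ (by positivity)]
    ring_nf
  · rw [if_neg hy, indicator_of_notMem (fun h => hy (mem_Ioi.1 h)), ENNReal.ofReal_zero]

theorem preimage_exp_setOf_sq_mul_le {k a b : ℝ} (hk : 0 < k) (ha : 0 < a) (hb : 0 < b) :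
    rexp ⁻¹' {y | (k * y) ^ 2 * a ≤ b} = Iic (-(log (a / b) / 2 + log k)) := by
  ext t
  rw [mem_preimage, mem_ofPred_eq, mem_Iic, ← log_le_log_iff (by positivity) hb,
    log_mul (by positivity) ha.ne', log_pow, log_mul hk.ne' (exp_pos t).ne', log_exp,
    log_div ha.ne' hb.ne']
  push_cast
  constructor <;> intro h <;> linarith

theorem map_exp_gaussianReal_real_setOf_sq_mul_le (m : ℝ) {v : ℝ≥0} (hv : v ≠ 0)
    {k a b : ℝ} (hk : 0 < k) (ha : 0 < a) (hb : 0 < b) :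
    ((gaussianReal m v).map rexp).real {y | (k * y) ^ 2 * a ≤ b}
      = (1 - erf ((log (a / b) / 2 + log k + m) / √(2 * v))) / 2 := by
  rw [map_measureReal_apply measurable_exp (measurableSet_le (by fun_prop) (by fun_prop)),
    preimage_exp_setOf_sq_mul_le hk ha hb, gaussianReal_real_Iic m hv, ← neg_add', neg_div,
    erf_neg, sub_eq_add_neg]

theorem ProbabilityTheory.IndepFun.measureReal_mem_eq_integral {Ω α β : Type*}
    [MeasurableSpace Ω] [MeasurableSpace α] [MeasurableSpace β]
    {P : Measure Ω} [IsFiniteMeasure P]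
    {X : Ω → α} {Y : Ω → β} (hXY : IndepFun X Y P) (hX : Measurable X) (hY : Measurable Y)
    {S : Set (α × β)} (hS : MeasurableSet S) :
    P.real {ω | (X ω, Y ω) ∈ S} = ∫ x, (P.map Y).real (Prod.mk x ⁻¹' S) ∂(P.map X) := by
  change P.real ((fun ω => (X ω, Y ω)) ⁻¹' S) = _
  rw [← map_measureReal_apply (hX.prodMk hY) hS,
    (indepFun_iff_map_prod_eq_prod_map_map hX.aemeasurable hY.aemeasurable).1 hXY,
    measureReal_def, Measure.prod_apply hS]
  exact (integral_toReal (measurable_measure_prodMk_left hS).aemeasurable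
    (ae_of_all _ fun _ => measure_lt_top _ _)).symm

theorem integral_withDensity_ofReal_ite_Ioc {a : ℝ} {f : ℝ → ℝ} (hf : Measurable f)
    (hf0 : ∀ x ∈ Ioc 0 a, 0 ≤ f x) (g : ℝ → ℝ) :
    ∫ x, g x ∂volume.withDensity
        (fun x => ENNReal.ofReal (if 0 < x ∧ x ≤ a then f x else 0))
      = ∫ x in Ioc 0 a, f x * g x := by
  have hdens : (fun x => ENNReal.ofReal (if 0 < x ∧ x ≤ a then f x else 0))
      = (Ioc 0 a).indicator fun x => ENNReal.ofReal (f x) := by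
    funext x
    by_cases hx : 0 < x ∧ x ≤ a
    · rw [if_pos hx, indicator_of_mem (show x ∈ Ioc 0 a from hx)]
    · rw [if_neg hx, indicator_of_notMem (show x ∉ Ioc 0 a from hx), ENNReal.ofReal_zero]
  rw [hdens, withDensity_indicator measurableSet_Ioc, integral_withDensity_eq_integral_toReal_smul
    hf.ennreal_ofReal (ae_of_all _ fun _ => ENNReal.ofReal_lt_top)]
  refine setIntegral_congr_fun measurableSet_Ioc fun x hx => ?_
  rw [ENNReal.toReal_ofReal (hf0 x hx), smul_eq_mul]

theorem continuous_besselI0 : Continuous besselI0 :=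
  continuous_const.mul <| intervalIntegral.continuous_parametric_intervalIntegral_of_continuous'
    (by fun_prop : Continuous fun p : ℝ × ℝ => rexp (p.1 * cos p.2)) 0 π

theorem besselI0_nonneg (x : ℝ) : 0 ≤ besselI0 x :=
  mul_nonneg (by positivity) (intervalIntegral.integral_nonneg pi_pos.le fun _ _ => (exp_pos _).le)

theorem setIntegral_Ioc_zero_eq_mul_intervalIntegral_comp_mul {a : ℝ} (ha : 0 < a)
    (f : ℝ → ℝ) :
    ∫ x in Ioc 0 a, f x = a * ∫ x in (0:ℝ)..1, f (a * x) := by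
  rw [intervalIntegral.integral_comp_mul_left f ha.ne', mul_zero, mul_one, smul_eq_mul,
    mul_inv_cancel_left₀ ha.ne', intervalIntegral.integral_of_le ha.le]

theorem outage_probability_lognormal_general {Ω : Type*} [MeasurableSpace Ω]
    (P : Measure Ω) [IsProbabilityMeasure P]
    (A₀ t q Ωm σ η hp γb γthr ϖ : ℝ)
    (hA₀ : 0 < A₀) (ht : 0 < t) (hq : 0 < q) (hΩm : 0 < Ωm) (hσ : 0 < σ)
    (hη : 0 < η) (hhp : 0 < hp) (hγb : 0 < γb) (hγthr : 0 < γthr)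
    (hϖ : ϖ = (1 + q ^ 2) * t / (4 * q * Ωm))
    (hg ha : Ω → ℝ) (hmhg : Measurable hg) (hmha : Measurable ha)
    (hlawg : Measure.map hg P = volume.withDensity (fun x => ENNReal.ofReal (
        if 0 < x ∧ x ≤ A₀ then
          (ϖ / A₀) * (x / A₀) ^ ((1 + q ^ 2) * ϖ / (2 * q) - 1) *
            besselI0 (-((1 - q ^ 2) * ϖ / (2 * q)) * Real.log (x / A₀))
        else 0)))
    (hlawa : Measure.map ha P = volume.withDensity (fun x => ENNReal.ofReal (
        if 0 < x then
          (1 / (Real.sqrt (8 * π * σ ^ 2) * x)) *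
            Real.exp (-(Real.log x + 2 * σ ^ 2) ^ 2 / (8 * σ ^ 2))
        else 0)))
    (hindep : IndepFun hg ha P) :
    (P {ω | (η * hp * hg ω * ha ω) ^ 2 * γb ≤ γthr}).toReal
      = (ϖ / 2) * ∫ x in (0:ℝ)..1,
          x ^ ((1 + q ^ 2) * ϖ / (2 * q) - 1) *
            besselI0 (-((1 - q ^ 2) * ϖ / (2 * q)) * Real.log x) *
            (1 - erf ((0.5 * Real.log (γb / γthr) + Real.log (η * hp * A₀ * x) - 2 * σ ^ 2)
              / Real.sqrt (8 * σ ^ 2))) := by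
  have hϖ0 : 0 ≤ ϖ := by rw [hϖ]; positivity
  have hvar : 2 * ((4 * σ ^ 2).toNNReal : ℝ) = 8 * σ ^ 2 := by
    rw [Real.coe_toNNReal _ (by positivity)]; ring
  set S := {p : ℝ × ℝ | (η * hp * p.1 * p.2) ^ 2 * γb ≤ γthr}
  have hslice (x : ℝ) (hx : 0 < x) : (P.map ha).real (Prod.mk x ⁻¹' S) =
      (1 - erf ((0.5 * Real.log (γb / γthr) + Real.log (η * hp * x) - 2 * σ ^ 2)
        / Real.sqrt (8 * σ ^ 2))) / 2 := by
    rw [hlawa, withDensity_logNormal_eq_map_exp_gaussianReal hσ.ne',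
      show Prod.mk x ⁻¹' S = {y | (η * hp * x * y) ^ 2 * γb ≤ γthr} from rfl,
      map_exp_gaussianReal_real_setOf_sq_mul_le _ (Real.toNNReal_pos.2 (by positivity)).ne'
        (by positivity) hγb hγthr, hvar]
    congr 4
    ring
  have hS : MeasurableSet S := measurableSet_le (by fun_prop) (by fun_prop)
  refine (hindep.measureReal_mem_eq_integral hmhg hmha hS).trans ?_
  rw [hlawg, integral_withDensity_ofReal_ite_Ioc,
    setIntegral_Ioc_zero_eq_mul_intervalIntegral_comp_mul hA₀,
    ← intervalIntegral.integral_const_mul, ← intervalIntegral.integral_const_mul]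
  · refine intervalIntegral.integral_congr_ae (ae_of_all _ fun x hx => ?_)
    rw [uIoc_of_le zero_le_one] at hx
    rw [hslice (A₀ * x) (by positivity [hx.1]), mul_div_cancel_left₀ _ hA₀.ne',
      ← mul_assoc (η * hp)]
    field_simp
  · have := continuous_besselI0.measurable
    fun_prop
  · exact fun x hx => mul_nonneg (by positivity [hx.1]) (besselI0_nonneg _)

/-- Eq. (38): outage probability of the IRS-assisted FSO link under log-normal turbulence:
for the composite channel `h = η h_p h_g h_a` with `h_g` having the GML density of Eq. (32)
and `h_a` independent log-normal fading,
`P(h² γ̄ ≤ γ_thr) = (ϖ/2) ∫₀¹ x^{(1+q²)ϖ/(2q)−1} I₀(−((1−q²)ϖ/(2q)) ln x)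
  [1 − erf((0.5 ln(γ̄/γ_thr) + ln(η h_p A₀ x) − 2σ²)/√(8σ²))] dx`. -/
theorem outage_probability_lognormal {Ω : Type*} [MeasurableSpace Ω]
    (P : Measure Ω) [IsProbabilityMeasure P]
    (A₀ t q Ωm σ η hp γb γthr ϖ : ℝ)
    (hA₀ : 0 < A₀) (ht : 0 < t) (hq : 0 < q) (hq1 : q ≤ 1) (hΩm : 0 < Ωm) (hσ : 0 < σ)
    (hη : 0 < η) (hhp : 0 < hp) (hγb : 0 < γb) (hγthr : 0 < γthr)
    (hϖ : ϖ = (1 + q ^ 2) * t / (4 * q * Ωm))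
    (hg ha : Ω → ℝ) (hmhg : Measurable hg) (hmha : Measurable ha)
    (hlawg : Measure.map hg P = volume.withDensity (fun x => ENNReal.ofReal (
        if 0 < x ∧ x ≤ A₀ then
          (ϖ / A₀) * (x / A₀) ^ ((1 + q ^ 2) * ϖ / (2 * q) - 1) *
            besselI0 (-((1 - q ^ 2) * ϖ / (2 * q)) * Real.log (x / A₀))
        else 0)))
    (hlawa : Measure.map ha P = volume.withDensity (fun x => ENNReal.ofReal (
        if 0 < x then
          (1 / (Real.sqrt (8 * π * σ ^ 2) * x)) *
            Real.exp (-(Real.log x + 2 * σ ^ 2) ^ 2 / (8 * σ ^ 2))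
        else 0)))
    (hindep : IndepFun hg ha P) :
    (P {ω | (η * hp * hg ω * ha ω) ^ 2 * γb ≤ γthr}).toReal
      = (ϖ / 2) * ∫ x in (0:ℝ)..1,
          x ^ ((1 + q ^ 2) * ϖ / (2 * q) - 1) *
            besselI0 (-((1 - q ^ 2) * ϖ / (2 * q)) * Real.log x) *
            (1 - erf ((0.5 * Real.log (γb / γthr) + Real.log (η * hp * A₀ * x) - 2 * σ ^ 2)
              / Real.sqrt (8 * σ ^ 2))) :=
  outage_probability_lognormal_general P A₀ t q Ωm σ η hp γb γthr ϖ hA₀ ht hq hΩm hσ hη hhp hγb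
    hγthr hϖ hg ha hmhg hmha hlawg hlawa hindep
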